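/- Let Z_1, …, Z_n be independent random variables with mean zero and E[|Z_i|^α] < ∞ for some 1 < α ≤ 2. Then E[|∑_{i=1}^n Z_i|^α] ≤ 2 · ∑_{i=1}^n E[|Z_i|^α]. Consequently, P(|(1/n)∑_{i=1}^n Z_i| > ε) ≤ 2 ∑_i E[|Z_i|^α] / (ε n)^α. -/

import Mathlib

/-!
For `1 ≤ α ≤ 2` one has the pointwise inequality
`|x + y| ^ α ≤ |x| ^ α + α * sign x * |x| ^ (α - 1) * y + 2 * |y| ^ α`;
by homogeneity it reduces to `x = 1`, where it is one-variable calculus. Applied to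
`x = Z₁ + ⋯ + Z_{k-1}` and `y = Z_k`, independence and `E Z_k = 0` make the middle term vanish
in expectation, so `E |Z₁ + ⋯ + Z_k| ^ α ≤ E |Z₁ + ⋯ + Z_{k-1}| ^ α + 2 E |Z_k| ^ α`, and induction
gives the moment bound. The tail bound is Markov's inequality for `|∑ Z_i| ^ α`.
-/

open MeasureTheory ProbabilityTheory Set

theorem Real.measurable_sign : Measurable Real.sign :=
  Measurable.ite measurableSet_Iio measurable_const
    (Measurable.ite measurableSet_Ioi measurable_const measurable_const)

/-- For `p = α - 1` this is `(1 / α) * d/dx |x| ^ α`. -/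
noncomputable def signedRpow (p x : ℝ) : ℝ := Real.sign x * |x| ^ p

theorem measurable_signedRpow (p : ℝ) : Measurable (signedRpow p) :=
  Real.measurable_sign.mul (measurable_id.abs.pow_const p)

theorem abs_signedRpow_le (p x : ℝ) : |signedRpow p x| ≤ |x| ^ p := by
  rw [signedRpow, abs_mul, abs_of_nonneg (Real.rpow_nonneg (abs_nonneg x) p)]
  refine mul_le_of_le_one_left (Real.rpow_nonneg (abs_nonneg x) p) ?_
  rcases Real.sign_apply_eq x with h | h | h <;> simp [h]

theorem le_of_hasDerivAt_of_nonneg {f f' : ℝ → ℝ} {a b : ℝ} (hab : a ≤ b)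
    (hf : ∀ x, HasDerivAt f (f' x) x) (hf' : ∀ x ∈ Ioo a b, 0 ≤ f' x) : f a ≤ f b :=
  monotoneOn_of_hasDerivWithinAt_nonneg (convex_Icc a b)
    (fun x _ => (hf x).continuousAt.continuousWithinAt)
    (fun x _ => (hf x).hasDerivWithinAt) (by rwa [interior_Icc])
    (left_mem_Icc.2 hab) (right_mem_Icc.2 hab) hab

section Scalar

variable {α : ℝ}

theorem one_add_rpow_le (hα1 : 1 ≤ α) (hα2 : α ≤ 2) {t : ℝ} (ht : 0 ≤ t) :
    (1 + t) ^ α ≤ 1 + α * t + t ^ α := by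
  have hderiv (x : ℝ) : HasDerivAt (fun x => 1 + α * x + x ^ α - (1 + x) ^ α)
      (α * (1 + x ^ (α - 1) - (1 + x) ^ (α - 1))) x := by
    have h := ((((hasDerivAt_id x).const_mul α).const_add 1).add
      (Real.hasDerivAt_rpow_const (Or.inr hα1))).sub
      (((hasDerivAt_id x).const_add 1).rpow_const (Or.inr hα1))
    refine h.congr_deriv ?_
    simp only [id]
    ring
  have key := le_of_hasDerivAt_of_nonneg ht hderiv fun x hx => by
    have := Real.rpow_add_le_add_rpow zero_le_one hx.1.le (by linarith) (by linarith : α - 1 ≤ 1)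
    rw [Real.one_rpow] at this
    exact mul_nonneg (by linarith) (by linarith)
  simpa only [mul_zero, add_zero, Real.zero_rpow (by linarith : α ≠ 0), Real.one_rpow, sub_self,
    sub_nonneg] using key

theorem one_sub_rpow_le (hα1 : 1 ≤ α) (hα2 : α ≤ 2) {s : ℝ} (hs0 : 0 ≤ s) (hs1 : s ≤ 1) :
    (1 - s) ^ α ≤ 1 - α * s + 2 * s ^ α := by
  have hderiv (x : ℝ) : HasDerivAt (fun x => 1 - α * x + 2 * x ^ α - (1 - x) ^ α)
      (α * (2 * x ^ (α - 1) + (1 - x) ^ (α - 1) - 1)) x := by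
    have h := ((((hasDerivAt_id x).const_mul α).const_sub 1).add
      ((Real.hasDerivAt_rpow_const (Or.inr hα1)).const_mul 2)).sub
      (((hasDerivAt_id x).const_sub 1).rpow_const (Or.inr hα1))
    refine h.congr_deriv ?_
    simp only [id]
    ring
  have key := le_of_hasDerivAt_of_nonneg hs0 hderiv fun x hx => by
    have h1 := Real.rpow_le_rpow_of_exponent_ge hx.1 (hx.2.le.trans hs1) (by linarith : α - 1 ≤ 1)
    have h2 := Real.rpow_le_rpow_of_exponent_ge (by linarith [hx.2, hs1] : 0 < 1 - x)
      (by linarith [hx.1]) (by linarith : α - 1 ≤ 1)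
    rw [Real.rpow_one] at h1 h2
    exact mul_nonneg (by linarith) (by linarith [hx.1])
  simpa only [mul_zero, sub_zero, Real.zero_rpow (by linarith : α ≠ 0), add_zero, Real.one_rpow,
    sub_self, sub_nonneg] using key

theorem abs_one_add_rpow_le (hα1 : 1 ≤ α) (hα2 : α ≤ 2) (t : ℝ) :
    |1 + t| ^ α ≤ 1 + α * t + 2 * |t| ^ α := by
  rcases le_or_gt 0 t with ht | ht
  · rw [abs_of_nonneg (by linarith), abs_of_nonneg ht]
    linarith [one_add_rpow_le hα1 hα2 ht, Real.rpow_nonneg ht α]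
  rcases le_or_gt (-1) t with ht1 | ht1
  · rw [abs_of_nonneg (by linarith), abs_of_neg ht]
    simpa [sub_eq_add_neg] using one_sub_rpow_le hα1 hα2 (neg_nonneg.2 ht.le) (by linarith)
  · rw [abs_of_neg (by linarith), abs_of_neg ht]
    have hmono : (-(1 + t)) ^ α ≤ (-t) ^ α :=
      Real.rpow_le_rpow (by linarith) (by linarith) (by linarith)
    have hbernoulli := one_add_mul_self_le_rpow_one_add (by linarith : -1 ≤ -t - 1) hα1
    rw [add_sub_cancel] at hbernoulli
    linarith

theorem abs_add_rpow_le (hα1 : 1 ≤ α) (hα2 : α ≤ 2) (x y : ℝ) :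
    |x + y| ^ α ≤ |x| ^ α + α * (signedRpow (α - 1) x * y) + 2 * |y| ^ α := by
  rcases eq_or_ne x 0 with rfl | hx
  · simp only [zero_add, abs_zero, Real.zero_rpow (by linarith : α ≠ 0), signedRpow,
      Real.sign_zero, zero_mul, mul_zero, add_zero]
    linarith [Real.rpow_nonneg (abs_nonneg y) α]
  have hsigned : |x| ^ α * (y / x) = signedRpow (α - 1) x * y := by
    rw [signedRpow, Real.rpow_sub_one (abs_ne_zero.2 hx)]
    rcases hx.lt_or_gt with hx | hx
    · rw [Real.sign_of_neg hx, abs_of_neg hx]; field_simp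
    · rw [Real.sign_of_pos hx, abs_of_pos hx]; field_simp
  calc |x + y| ^ α = |x| ^ α * |1 + y / x| ^ α := by
        rw [← Real.mul_rpow (abs_nonneg x) (abs_nonneg _), ← abs_mul, mul_one_add,
          mul_div_cancel₀ y hx]
    _ ≤ |x| ^ α * (1 + α * (y / x) + 2 * |y / x| ^ α) :=
        mul_le_mul_of_nonneg_left (abs_one_add_rpow_le hα1 hα2 _) (by positivity)
    _ = |x| ^ α + α * (|x| ^ α * (y / x)) + 2 * (|x| * |y / x|) ^ α := by
        rw [Real.mul_rpow (abs_nonneg x) (abs_nonneg _)]; ring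
    _ = |x| ^ α + α * (signedRpow (α - 1) x * y) + 2 * |y| ^ α := by
        rw [hsigned, ← abs_mul, mul_div_cancel₀ y hx]

end Scalar

section Probability

variable {Ω : Type*} [MeasurableSpace Ω] {μ : Measure Ω} {α : ℝ}

theorem integrable_abs_rpow_iff_memLp {f : Ω → ℝ} (hf : AEStronglyMeasurable f μ) (hα : 0 < α) :
    Integrable (fun ω => |f ω| ^ α) μ ↔ MemLp f (ENNReal.ofReal α) μ := by
  rw [← integrable_norm_rpow_iff hf (by simpa using hα) ENNReal.ofReal_ne_top,
    ENNReal.toReal_ofReal hα.le]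
  rfl

theorem integrable_abs_sum_rpow {ι : Type*} (hα : 0 < α) {Z : ι → Ω → ℝ}
    (hmeas : ∀ i, AEStronglyMeasurable (Z i) μ) (hint : ∀ i, Integrable (fun ω => |Z i ω| ^ α) μ)
    (s : Finset ι) : Integrable (fun ω => |∑ i ∈ s, Z i ω| ^ α) μ :=
  (integrable_abs_rpow_iff_memLp (Finset.aestronglyMeasurable_fun_sum s fun i _ => hmeas i) hα).2 <|
    memLp_finsetSum s fun i _ => (integrable_abs_rpow_iff_memLp (hmeas i) hα).1 (hint i)

theorem integrable_of_integrable_abs_rpow [IsFiniteMeasure μ] {f : Ω → ℝ}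
    (hf : AEStronglyMeasurable f μ) (hα : 1 ≤ α) (hint : Integrable (fun ω => |f ω| ^ α) μ) :
    Integrable f μ := by
  have := integrable_norm_rpow_of_le hf zero_le_one (by linarith) hα hint
  simpa only [Real.rpow_one, integrable_norm_iff hf] using this

theorem integral_abs_add_rpow_le [IsFiniteMeasure μ] (hα1 : 1 ≤ α) (hα2 : α ≤ 2) {X Y : Ω → ℝ}
    (hXY : IndepFun X Y μ) (hX : AEMeasurable X μ) (hY : AEMeasurable Y μ)
    (hY0 : ∫ ω, Y ω ∂μ = 0) (hXα : Integrable (fun ω => |X ω| ^ α) μ)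
    (hYα : Integrable (fun ω => |Y ω| ^ α) μ) :
    ∫ ω, |X ω + Y ω| ^ α ∂μ ≤ ∫ ω, |X ω| ^ α ∂μ + 2 * ∫ ω, |Y ω| ^ α ∂μ := by
  set G := fun ω => signedRpow (α - 1) (X ω)
  have hGmeas : AEStronglyMeasurable G μ :=
    ((measurable_signedRpow _).comp_aemeasurable hX).aestronglyMeasurable
  have hG : Integrable G μ := by
    refine (integrable_norm_rpow_of_le (p := α - 1) hX.aestronglyMeasurable (by linarith)
      (by linarith) (by linarith) hXα).mono' hGmeas (ae_of_all _ fun ω => ?_)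
    simpa only [Real.norm_eq_abs] using abs_signedRpow_le (α - 1) (X ω)
  have hGY : IndepFun G Y μ := hXY.comp (measurable_signedRpow _) measurable_id
  have hGYint : Integrable (fun ω => G ω * Y ω) μ :=
    hGY.integrable_mul hG (integrable_of_integrable_abs_rpow hY.aestronglyMeasurable hα1 hYα)
  have hcross : ∫ ω, G ω * Y ω ∂μ = 0 := by
    have := hGY.integral_mul_eq_mul_integral hGmeas hY.aestronglyMeasurable
    simpa [hY0] using this
  have hXG : Integrable (fun ω => |X ω| ^ α + α * (G ω * Y ω)) μ := hXα.add (hGYint.const_mul α)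
  calc ∫ ω, |X ω + Y ω| ^ α ∂μ
      ≤ ∫ ω, (|X ω| ^ α + α * (G ω * Y ω) + 2 * |Y ω| ^ α) ∂μ :=
        integral_mono_of_nonneg (ae_of_all _ fun ω => by positivity) (hXG.add (hYα.const_mul 2))
          (ae_of_all _ fun ω => abs_add_rpow_le hα1 hα2 (X ω) (Y ω))
    _ = ∫ ω, |X ω| ^ α ∂μ + 2 * ∫ ω, |Y ω| ^ α ∂μ := by
        rw [integral_add hXG (hYα.const_mul 2),
          integral_add hXα (hGYint.const_mul α), integral_const_mul, integral_const_mul, hcross,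
          mul_zero, add_zero]

theorem integral_abs_sum_rpow_le [IsFiniteMeasure μ] {ι : Type*} (hα1 : 1 ≤ α) (hα2 : α ≤ 2)
    {Z : ι → Ω → ℝ} (hindep : iIndepFun Z μ) (hmeas : ∀ i, Measurable (Z i))
    (hmean : ∀ i, ∫ ω, Z i ω ∂μ = 0) (hint : ∀ i, Integrable (fun ω => |Z i ω| ^ α) μ)
    (s : Finset ι) :
    ∫ ω, |∑ i ∈ s, Z i ω| ^ α ∂μ ≤ 2 * ∑ i ∈ s, ∫ ω, |Z i ω| ^ α ∂μ := by
  classical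
  induction s using Finset.induction_on with
  | empty => simp [Real.zero_rpow (by linarith : α ≠ 0)]
  | insert i s hi ih =>
    have hsum_indep : IndepFun (fun ω => ∑ j ∈ s, Z j ω) (Z i) μ := by
      simpa only [← Finset.sum_apply] using hindep.indepFun_finsetSum_of_notMem hmeas hi
    have step := integral_abs_add_rpow_le hα1 hα2 hsum_indep
      (Finset.measurable_fun_sum s fun j _ => hmeas j).aemeasurable (hmeas i).aemeasurable
      (hmean i) (integrable_abs_sum_rpow (by linarith) (fun j => (hmeas j).aestronglyMeasurable)
        hint s) (hint i)
    simp only [Finset.sum_insert hi, add_comm (Z i _)]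
    linarith

theorem measureReal_lt_abs_le_integral_abs_rpow_div [IsFiniteMeasure μ] {f : Ω → ℝ}
    (hα : 0 ≤ α) (hf : Integrable (fun ω => |f ω| ^ α) μ) {c : ℝ} (hc : 0 < c) :
    μ.real {ω | c < |f ω|} ≤ (∫ ω, |f ω| ^ α ∂μ) / c ^ α := by
  have hsub : {ω | c < |f ω|} ⊆ {ω | c ^ α ≤ |f ω| ^ α} := fun ω hω =>
    Real.rpow_le_rpow hc.le (le_of_lt hω) hα
  rw [le_div_iff₀ (by positivity), mul_comm]
  exact (mul_le_mul_of_nonneg_left (measureReal_mono hsub) (by positivity)).trans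
    (mul_meas_ge_le_integral_of_nonneg (ae_of_all _ fun ω => by positivity) hf _)

end Probability

/-- von Bahr–Esseen inequality. For independent mean-zero random
variables `Z_1,…,Z_n` with `E[|Z_i|^α] < ∞`, `1 < α ≤ 2`:
`E[|∑ Z_i|^α] ≤ 2 ∑ E[|Z_i|^α]`, and consequently
`P(|(1/n)∑ Z_i| > ε) ≤ 2 ∑ E[|Z_i|^α] / (εn)^α`. -/
theorem stmt7 {Ω : Type*} [MeasureSpace Ω] [IsProbabilityMeasure (ℙ : Measure Ω)]
    (α : ℝ) (hα1 : 1 < α) (hα2 : α ≤ 2) (n : ℕ) (hn : 0 < n)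
    (Z : ℕ → Ω → ℝ)
    (hindep : iIndepFun Z ℙ)
    (hmeas : ∀ i, Measurable (Z i))
    (hmean : ∀ i, ∫ ω, Z i ω = 0)
    (hint : ∀ i, Integrable (fun ω => |Z i ω| ^ α) (ℙ : Measure Ω)) :
    (∫ ω, |∑ i ∈ Finset.range n, Z i ω| ^ α)
        ≤ 2 * ∑ i ∈ Finset.range n, ∫ ω, |Z i ω| ^ α ∧
    ∀ ε : ℝ, 0 < ε →
      (ℙ {ω : Ω | ε < |(∑ i ∈ Finset.range n, Z i ω) / (n : ℝ)|}).toReal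
        ≤ 2 * (∑ i ∈ Finset.range n, ∫ ω, |Z i ω| ^ α) / (ε * (n : ℝ)) ^ α := by
  have hbound := integral_abs_sum_rpow_le hα1.le hα2 hindep hmeas hmean hint (Finset.range n)
  refine ⟨hbound, fun ε hε => ?_⟩
  have hn' : (0 : ℝ) < n := Nat.cast_pos.2 hn
  have hset : {ω | ε < |(∑ i ∈ Finset.range n, Z i ω) / (n : ℝ)|}
      = {ω | ε * n < |∑ i ∈ Finset.range n, Z i ω|} := by
    ext ω
    simp only [mem_ofPred_eq, abs_div, Nat.abs_cast, lt_div_iff₀ hn']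
  rw [hset, ← measureReal_def]
  calc _ ≤ (∫ ω, |∑ i ∈ Finset.range n, Z i ω| ^ α) / (ε * n) ^ α :=
        measureReal_lt_abs_le_integral_abs_rpow_div (by linarith)
          (integrable_abs_sum_rpow (by linarith) (fun i => (hmeas i).aestronglyMeasurable) hint _)
          (mul_pos hε hn')
    _ ≤ _ := by gcongr
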